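/- For every Schwartz function f on ℝ² and every (x₁, k) ∈ ℝ², the partial Fourier transform in the second variable, ℱ[f](x₁,k) := (2π)^{−1/2} ∫_ℝ f(x₁,x₂) e^{i k x₂} dx₂, conjugates the Landau operator to a shifted harmonic oscillator: ℱ[L_A f](x₁, k) = −∂²_{x₁} ℱ[f](x₁,k) + (b x₁ − k)² ℱ[f](x₁,k). -/

import Mathlib

open MeasureTheory Real

/-- The Landau operator with gauge `A = b(0, x₁, 0)`:
`(L_A f)(x₁,x₂) = −∂²_{x₁} f − ∂²_{x₂} f − 2 i b x₁ ∂_{x₂} f + b² x₁² f`. -/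
noncomputable def landauOp (b : ℝ) (f : ℝ × ℝ → ℂ) : ℝ × ℝ → ℂ := fun x =>
  -(deriv (deriv (fun t => f (t, x.2))) x.1)
    - deriv (deriv (fun t => f (x.1, t))) x.2
    - 2 * Complex.I * b * x.1 * deriv (fun t => f (x.1, t)) x.2
    + b ^ 2 * x.1 ^ 2 * f x

/-- Partial Fourier transform in the second variable:
`ℱ[f](x₁,k) = (2π)^{-1/2} ∫ f(x₁,x₂) e^{i k x₂} dx₂`. -/
noncomputable def partialFourier (f : ℝ × ℝ → ℂ) : ℝ × ℝ → ℂ := fun p =>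
  (Real.sqrt (2 * π))⁻¹ * ∫ y : ℝ, f (p.1, y) * Complex.exp (Complex.I * p.2 * y)

/-! On every slice `x₁ = const` the transform is a Fourier transform in `x₂`. Integration by
parts (boundary terms vanish by Schwartz decay) turns `∂_{x₂}` into multiplication by `-i k`, and
`∂_{x₁}` commutes with the transform by differentiation under the integral sign, dominated by the
uniform decay `(1 + |x₂|)⁻²` of `∂_{x₁} f`. Hence `-∂²_{x₂} - 2 i b x₁ ∂_{x₂} + b² x₁²` becomes
`k² - 2 b k x₁ + b² x₁² = (b x₁ - k)²`. -/

open SchwartzMap LineDeriv Complex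

theorem norm_exp_I_mul_mul (k y : ℝ) : ‖cexp (I * k * y)‖ = 1 := by
  rw [mul_assoc, ← ofReal_mul, norm_exp_I_mul_ofReal]

theorem hasDerivAt_exp_I_mul_mul (k y : ℝ) :
    HasDerivAt (fun t : ℝ => cexp (I * k * t)) (I * k * cexp (I * k * y)) y := by
  simpa [mul_comm] using ((hasDerivAt_id y).ofReal_comp.const_mul (I * k)).cexp

namespace SchwartzMap

variable {E F : Type*} [NormedAddCommGroup E] [NormedSpace ℝ E]
  [NormedAddCommGroup F] [NormedSpace ℝ F]

theorem exists_norm_le_one_add_norm_snd_rpow_neg_two (g : 𝓢(E × ℝ, F)) :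
    ∃ C, ∀ x, ‖g x‖ ≤ C * (1 + ‖x.2‖) ^ (-2 : ℝ) := by
  refine ⟨2 ^ 2 * (Finset.Iic (2, 0)).sup (fun m => SchwartzMap.seminorm ℝ m.1 m.2) g,
    fun x => ?_⟩
  have hg := one_add_le_sup_seminorm_apply (𝕜 := ℝ) (m := (2, 0)) le_rfl le_rfl g x
  rw [norm_iteratedFDeriv_zero] at hg
  rw [Real.rpow_neg (by positivity), Real.rpow_two, ← div_eq_mul_inv,
    le_div_iff₀ (by positivity), mul_comm]
  calc (1 + ‖x.2‖) ^ 2 * ‖g x‖ ≤ (1 + ‖x‖) ^ 2 * ‖g x‖ := by gcongr; exact norm_snd_le x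
    _ ≤ _ := hg

theorem integrable_apply_prodMk (g : 𝓢(E × ℝ, F)) (x : E) :
    Integrable fun y => g (x, y) := by
  obtain ⟨C, hC⟩ := g.exists_norm_le_one_add_norm_snd_rpow_neg_two
  exact ((integrable_one_add_norm (by simp)).const_mul C).mono'
    (g.continuous.comp (Continuous.prodMk_right x)).aestronglyMeasurable
    (.of_forall fun y => hC (x, y))

theorem integrable_apply_prodMk_mul_exp (g : 𝓢(E × ℝ, ℂ)) (x : E) (k : ℝ) :
    Integrable fun y : ℝ => g (x, y) * cexp (I * k * y) :=
  (g.integrable_apply_prodMk x).mul_bdd (by fun_prop : Continuous _).aestronglyMeasurable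
    (.of_forall fun y => (norm_exp_I_mul_mul k y).le)

theorem hasDerivAt_apply_prodMk_snd (g : 𝓢(E × ℝ, F)) (x : E) (y : ℝ) :
    HasDerivAt (fun t => g (x, t)) (∂_{((0 : E), (1 : ℝ))} g (x, y)) y :=
  (g.hasFDerivAt (x, y)).comp_hasDerivAt y ((hasDerivAt_const y x).prodMk (hasDerivAt_id y))

theorem hasDerivAt_apply_prodMk_fst (g : 𝓢(ℝ × E, F)) (t : ℝ) (y : E) :
    HasDerivAt (fun s => g (s, y)) (∂_{((1 : ℝ), (0 : E))} g (t, y)) t :=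
  (g.hasFDerivAt (t, y)).comp_hasDerivAt t ((hasDerivAt_id t).prodMk (hasDerivAt_const t y))

end SchwartzMap

local notation "∂₁" => (lineDerivOp ((1, 0) : ℝ × ℝ) : 𝓢(ℝ × ℝ, ℂ) → 𝓢(ℝ × ℝ, ℂ))
local notation "∂₂" => (lineDerivOp ((0, 1) : ℝ × ℝ) : 𝓢(ℝ × ℝ, ℂ) → 𝓢(ℝ × ℝ, ℂ))

theorem partialFourier_lineDerivOp_snd (g : 𝓢(ℝ × ℝ, ℂ)) (x k : ℝ) :
    partialFourier ⇑(∂₂ g) (x, k) = -(I * k) * partialFourier g (x, k) := by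
  have hg := g.integrable_apply_prodMk_mul_exp x k
  have hibp := integral_mul_deriv_eq_deriv_mul_of_integrable
    (u := fun y => g (x, y)) (v := fun y : ℝ => cexp (I * k * y))
    (fun y _ => g.hasDerivAt_apply_prodMk_snd x y) (fun y _ => hasDerivAt_exp_I_mul_mul k y)
    ((hg.const_mul (I * k)).congr (.of_forall fun y => by simp only [Pi.mul_apply]; ring))
    ((∂₂ g).integrable_apply_prodMk_mul_exp x k) hg
  have hint : ∫ y : ℝ, ∂₂ g (x, y) * cexp (I * k * y) =
      -(I * k) * ∫ y : ℝ, g (x, y) * cexp (I * k * y) := by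
    simp only [← neg_eq_iff_eq_neg.mpr hibp, mul_left_comm (g _), integral_const_mul, neg_mul]
  simp only [partialFourier, hint]
  ring

theorem hasDerivAt_partialFourier_fst (g : 𝓢(ℝ × ℝ, ℂ)) (x k : ℝ) :
    HasDerivAt (fun t => partialFourier g (t, k)) (partialFourier ⇑(∂₁ g) (x, k)) x := by
  obtain ⟨C, hC⟩ := (∂₁ g).exists_norm_le_one_add_norm_snd_rpow_neg_two
  refine (hasDerivAt_integral_of_dominated_loc_of_deriv_le (Metric.ball_mem_nhds x one_pos)
    (.of_forall fun t => (g.integrable_apply_prodMk_mul_exp t k).aestronglyMeasurable)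
    (g.integrable_apply_prodMk_mul_exp x k)
    ((∂₁ g).integrable_apply_prodMk_mul_exp x k).aestronglyMeasurable
    (.of_forall fun y t _ => ?_)
    ((integrable_one_add_norm (r := 2) (by simp)).const_mul C)
    (.of_forall fun y t _ => (g.hasDerivAt_apply_prodMk_fst t y).mul_const _)).2.const_mul _
  rw [norm_mul, norm_exp_I_mul_mul, mul_one]
  exact hC (t, y)

theorem deriv_partialFourier_fst (g : 𝓢(ℝ × ℝ, ℂ)) (k : ℝ) :
    deriv (fun t => partialFourier g (t, k)) = fun x => partialFourier ⇑(∂₁ g) (x, k) :=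
  funext fun x => (hasDerivAt_partialFourier_fst g x k).deriv

noncomputable def partialFourierLM (p : ℝ × ℝ) : 𝓢(ℝ × ℝ, ℂ) →ₗ[ℂ] ℂ where
  toFun g := partialFourier g p
  map_add' g h := by
    simp only [partialFourier, add_apply, add_mul]
    rw [integral_add (g.integrable_apply_prodMk_mul_exp _ _)
      (h.integrable_apply_prodMk_mul_exp _ _), mul_add]
  map_smul' c g := by
    simp only [partialFourier, smul_apply, smul_eq_mul, mul_assoc, integral_const_mul,
      RingHom.id_apply]
    ring

@[simp]
theorem partialFourierLM_apply (p : ℝ × ℝ) (g : 𝓢(ℝ × ℝ, ℂ)) :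
    partialFourierLM p g = partialFourier g p :=
  rfl

/-- The coefficients are frozen at `x₁`: on the slice through `x₁`, `landauOp b f` agrees with a
Schwartz map. -/
theorem landauOp_apply (b : ℝ) (f : 𝓢(ℝ × ℝ, ℂ)) (x₁ y : ℝ) :
    landauOp b f (x₁, y) = (-∂₁ (∂₁ f) - ∂₂ (∂₂ f) - (2 * I * b * x₁) • ∂₂ f
      + ((b : ℂ) ^ 2 * x₁ ^ 2) • f) (x₁, y) := by
  have h₁ : deriv (fun t => f (t, y)) = fun t => ∂₁ f (t, y) :=
    funext fun t => (f.hasDerivAt_apply_prodMk_fst t y).deriv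
  have h₂ : deriv (fun t => f (x₁, t)) = fun t => ∂₂ f (x₁, t) :=
    funext fun t => (f.hasDerivAt_apply_prodMk_snd x₁ t).deriv
  simp only [landauOp, h₁, h₂, ((∂₁ f).hasDerivAt_apply_prodMk_fst x₁ y).deriv,
    ((∂₂ f).hasDerivAt_apply_prodMk_snd x₁ y).deriv, add_apply, sub_apply, neg_apply,
    smul_apply, smul_eq_mul]

theorem partialFourier_landauOp_general (b : ℝ) (f : SchwartzMap (ℝ × ℝ) ℂ)
    (x₁ k : ℝ) :
    partialFourier (landauOp b f) (x₁, k) =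
      -(deriv (deriv (fun t => partialFourier (⇑f) (t, k))) x₁)
        + ((b : ℂ) * x₁ - k) ^ 2 * partialFourier (⇑f) (x₁, k) := by
  have hslice : partialFourier (landauOp b f) (x₁, k) = partialFourierLM (x₁, k)
      (-∂₁ (∂₁ f) - ∂₂ (∂₂ f) - (2 * I * b * x₁) • ∂₂ f + ((b : ℂ) ^ 2 * x₁ ^ 2) • f) := by
    simp only [partialFourierLM_apply, partialFourier, landauOp_apply]
  have hderiv : deriv (deriv fun t => partialFourier f (t, k)) x₁ =
      partialFourier ⇑(∂₁ (∂₁ f)) (x₁, k) := by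
    rw [deriv_partialFourier_fst]
    exact (hasDerivAt_partialFourier_fst _ x₁ k).deriv
  rw [hslice, hderiv]
  simp only [map_add, map_sub, map_neg, map_smul, smul_eq_mul, partialFourierLM_apply,
    partialFourier_lineDerivOp_snd]
  linear_combination (2 * (b : ℂ) * x₁ * k - (k : ℂ) ^ 2) * partialFourier f (x₁, k) * I_sq

/-- For every Schwartz function `f` on `ℝ²`, the partial Fourier transform in the second
variable conjugates the Landau operator to a shifted harmonic oscillator:
`ℱ[L_A f](x₁,k) = −∂²_{x₁} ℱ[f](x₁,k) + (b x₁ − k)² ℱ[f](x₁,k)`. -/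
theorem partialFourier_landauOp (b : ℝ) (hb : b ≠ 0) (f : SchwartzMap (ℝ × ℝ) ℂ)
    (x₁ k : ℝ) :
    partialFourier (landauOp b f) (x₁, k) =
      -(deriv (deriv (fun t => partialFourier (⇑f) (t, k))) x₁)
        + ((b : ℂ) * x₁ - k) ^ 2 * partialFourier (⇑f) (x₁, k) :=
  partialFourier_landauOp_general b f x₁ k
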